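/- arXiv:1410.6384 — 3 statements merged into one kernel-verified Lean document; each statement's English description precedes it below -/
import Mathlib

section
/- Let 0 ≤ λ₁ ≤ 1 < λ₂ < a+1, p ∈ (0,1), a > 0, with p·λ₁ + (1-p)·λ₂ > 1. Then p·a/(a+1-λ₁) + (1-p)·a/(a+1-λ₂) > 1 for every a > λ₂ - 1. -/
/-! Clearing the positive denominators, the excess of the left-hand side over `1` becomes
`a * (E Λ - 1) + (1 - λ₁) * (λ₂ - 1)`, a sum of two nonnegative terms the first of which is
positive because `E Λ > 1` and `a > λ₂ - 1 > 0`. -/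

lemma two_point_mean_div_sub_one_mul (lam₁ lam₂ a p : ℝ)
    (h₁ : a + 1 - lam₁ ≠ 0) (h₂ : a + 1 - lam₂ ≠ 0) :
    (p * a / (a + 1 - lam₁) + (1 - p) * a / (a + 1 - lam₂) - 1) *
        ((a + 1 - lam₁) * (a + 1 - lam₂)) =
      a * (p * lam₁ + (1 - p) * lam₂ - 1) + (1 - lam₁) * (lam₂ - 1) := by
  field_simp
  ring

theorem supercritical_mean_survives_all_a_general (lam₁ lam₂ a p : ℝ)
    (h2 : lam₁ ≤ 1) (h3 : 1 < lam₂)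
    (hmean : 1 < p * lam₁ + (1 - p) * lam₂)
    (ha : lam₂ - 1 < a) :
    1 < p * a / (a + 1 - lam₁) + (1 - p) * a / (a + 1 - lam₂) := by
  have hD₁ : 0 < a + 1 - lam₁ := by linarith
  have hD₂ : 0 < a + 1 - lam₂ := by linarith
  have hexcess : 0 < a * (p * lam₁ + (1 - p) * lam₂ - 1) + (1 - lam₁) * (lam₂ - 1) :=
    add_pos_of_pos_of_nonneg (mul_pos (by linarith) (by linarith))
      (mul_nonneg (by linarith) (by linarith))
  rw [← two_point_mean_div_sub_one_mul lam₁ lam₂ a p hD₁.ne' hD₂.ne'] at hexcess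
  linarith [(mul_pos_iff_of_pos_right (mul_pos hD₁ hD₂)).mp hexcess]

theorem supercritical_mean_survives_all_a (lam₁ lam₂ a p : ℝ)
    (h1 : 0 ≤ lam₁) (h2 : lam₁ ≤ 1) (h3 : 1 < lam₂)
    (hp0 : 0 < p) (hp1 : p < 1)
    (hmean : 1 < p * lam₁ + (1 - p) * lam₂)
    (ha : lam₂ - 1 < a) :
    1 < p * a / (a + 1 - lam₁) + (1 - p) * a / (a + 1 - lam₂) :=
  supercritical_mean_survives_all_a_general lam₁ lam₂ a p h2 h3 hmean ha
end

section
/- Let 0 ≤ λ₁ < 1 < λ₂ < a+1, p ∈ (0,1), a > 0, with p·λ₁ + (1-p)·λ₂ = 1. Then p·a/(a+1-λ₁) + (1-p)·a/(a+1-λ₂) > 1. -/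
/-! With `dᵢ = a + 1 - λᵢ`, the mean condition says that `a` is the `p`-weighted mean of `d₁ ≠ d₂`,
so the claim is strict convexity of `x ↦ x⁻¹`. -/

theorem inv_weightedMean_lt {x y p : ℝ} (hx : 0 < x) (hy : 0 < y) (hxy : x ≠ y)
    (hp0 : 0 < p) (hp1 : p < 1) :
    (p * x + (1 - p) * y)⁻¹ < p / x + (1 - p) / y := by
  have h := (strictConvexOn_zpow (m := -1) (by decide) (by decide)).2 (Set.mem_Ioi.2 hx)
    (Set.mem_Ioi.2 hy) hxy hp0 (sub_pos.2 hp1) (add_sub_cancel p 1)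
  simpa only [zpow_neg_one, smul_eq_mul, div_eq_mul_inv] using h

theorem critical_mean_survives_general (lam₁ lam₂ a p : ℝ)
    (h2 : lam₁ < 1) (h3 : 1 < lam₂) (h4 : lam₂ < a + 1)
    (hp0 : 0 < p) (hp1 : p < 1)
    (hmean : p * lam₁ + (1 - p) * lam₂ = 1) :
    1 < p * a / (a + 1 - lam₁) + (1 - p) * a / (a + 1 - lam₂) := by
  have hd₁ : 0 < a + 1 - lam₁ := by linarith
  have hd₂ : 0 < a + 1 - lam₂ := by linarith
  have hmean_d : p * (a + 1 - lam₁) + (1 - p) * (a + 1 - lam₂) = a := by linear_combination -hmean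
  have ha : 0 < a := by linarith [mul_pos hp0 hd₁, mul_pos (sub_pos.2 hp1) hd₂]
  have hconvex := inv_weightedMean_lt hd₁ hd₂ (by linarith) hp0 hp1
  rw [hmean_d, inv_lt_iff_one_lt_mul₀ ha] at hconvex
  calc 1 < (p / (a + 1 - lam₁) + (1 - p) / (a + 1 - lam₂)) * a := hconvex
    _ = p * a / (a + 1 - lam₁) + (1 - p) * a / (a + 1 - lam₂) := by ring

theorem critical_mean_survives (lam₁ lam₂ a p : ℝ)
    (h1 : 0 ≤ lam₁) (h2 : lam₁ < 1) (h3 : 1 < lam₂) (h4 : lam₂ < a + 1)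
    (ha : 0 < a) (hp0 : 0 < p) (hp1 : p < 1)
    (hmean : p * lam₁ + (1 - p) * lam₂ = 1) :
    1 < p * a / (a + 1 - lam₁) + (1 - p) * a / (a + 1 - lam₂) :=
  critical_mean_survives_general lam₁ lam₂ a p h2 h3 h4 hp0 hp1 hmean
end

section
/- Let a > 0, 0 < p < 1, 0 ≤ λ₁ < 1 < λ₂ < a+1 with E(Λ) := pλ₁+(1-p)λ₂ < 1, and let a_c = (1-λ₁)(1-λ₂)/(E(Λ)-1). Then for 0 < a ≤ λ₂ - 1 the survival criterion holds (E[exp((Λ-1)τ)] = +∞ > 1), and a_c > λ₂ - 1, so the set of a > 0 for which the process survives is exactly the interval (0, a_c). -/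
/-!
Over the common denominator `(a + 1 - λ₁)(a + 1 - λ₂)`, which is positive once `a > λ₂ - 1`,
the numerator of `E[exp((Λ - 1)τ)] - 1` is `a (E Λ - 1) - (1 - λ₁)(1 - λ₂)`: affine and strictly
decreasing in `a` when `E Λ < 1`, vanishing exactly at `a_c`. For `a ≤ λ₂ - 1` the expectation is
infinite, which matches `a < a_c` because
`(λ₂ - 1)(E Λ - 1) - (1 - λ₁)(1 - λ₂) = (λ₂ - 1)(1 - p)(λ₂ - λ₁) > 0`.
-/

open Set

noncomputable def criticalRate (lam₁ lam₂ p : ℝ) : ℝ :=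
  (1 - lam₁) * (1 - lam₂) / (p * lam₁ + (1 - p) * lam₂ - 1)

section TwoPoint

variable {lam₁ lam₂ p a : ℝ}

theorem two_point_sum_sub_one (hA : a + 1 - lam₁ ≠ 0) (hB : a + 1 - lam₂ ≠ 0) :
    p * a / (a + 1 - lam₁) + (1 - p) * a / (a + 1 - lam₂) - 1 =
      (a * (p * lam₁ + (1 - p) * lam₂ - 1) - (1 - lam₁) * (1 - lam₂)) /
        ((a + 1 - lam₁) * (a + 1 - lam₂)) := by
  field_simp
  ring

theorem one_lt_two_point_sum_iff (hA : 0 < a + 1 - lam₁) (hB : 0 < a + 1 - lam₂)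
    (hmean : p * lam₁ + (1 - p) * lam₂ < 1) :
    1 < p * a / (a + 1 - lam₁) + (1 - p) * a / (a + 1 - lam₂) ↔
      a < criticalRate lam₁ lam₂ p := by
  rw [← sub_pos, two_point_sum_sub_one hA.ne' hB.ne', div_pos_iff_of_pos_right (mul_pos hA hB),
    sub_pos, criticalRate, lt_div_iff_of_neg (by linarith)]

theorem sub_one_lt_criticalRate (h12 : lam₁ < lam₂) (hlam₂ : 1 < lam₂) (hp : p < 1)
    (hmean : p * lam₁ + (1 - p) * lam₂ < 1) :
    lam₂ - 1 < criticalRate lam₁ lam₂ p := by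
  rw [criticalRate, lt_div_iff_of_neg (by linarith)]
  have hgap : 0 < (lam₂ - 1) * (1 - p) * (lam₂ - lam₁) :=
    mul_pos (mul_pos (sub_pos.2 hlam₂) (sub_pos.2 hp)) (sub_pos.2 h12)
  linear_combination hgap

end TwoPoint

theorem survival_interval_subcritical_mean_general (lam₁ lam₂ p : ℝ)
    (h2 : lam₁ < 1) (h3 : 1 < lam₂)
    (hp1 : p < 1)
    (hmean : p * lam₁ + (1 - p) * lam₂ < 1) :
    lam₂ - 1 <
        (1 - lam₁) * (1 - lam₂) / (p * lam₁ + (1 - p) * lam₂ - 1) ∧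
      {a : ℝ | 0 < a ∧
          1 < (if lam₂ - 1 < a then
                ENNReal.ofReal (p * a / (a + 1 - lam₁) + (1 - p) * a / (a + 1 - lam₂))
              else ⊤)} =
        Ioo 0 ((1 - lam₁) * (1 - lam₂) / (p * lam₁ + (1 - p) * lam₂ - 1)) := by
  have hcrit : lam₂ - 1 < criticalRate lam₁ lam₂ p :=
    sub_one_lt_criticalRate (h2.trans h3) h3 hp1 hmean
  refine ⟨hcrit, Set.ext fun a => and_congr_right fun _ => ?_⟩
  split_ifs with hfinite
  · rw [ENNReal.one_lt_ofReal]
    exact one_lt_two_point_sum_iff (by linarith) (by linarith) hmean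
  · exact iff_of_true ENNReal.one_lt_top ((not_lt.1 hfinite).trans_lt hcrit)

theorem survival_interval_subcritical_mean (lam₁ lam₂ p : ℝ)
    (h1 : 0 ≤ lam₁) (h2 : lam₁ < 1) (h3 : 1 < lam₂)
    (hp0 : 0 < p) (hp1 : p < 1)
    (hmean : p * lam₁ + (1 - p) * lam₂ < 1) :
    lam₂ - 1 <
        (1 - lam₁) * (1 - lam₂) / (p * lam₁ + (1 - p) * lam₂ - 1) ∧
      {a : ℝ | 0 < a ∧
          1 < (if lam₂ - 1 < a then
                ENNReal.ofReal (p * a / (a + 1 - lam₁) + (1 - p) * a / (a + 1 - lam₂))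
              else ⊤)} =
        Ioo 0 ((1 - lam₁) * (1 - lam₂) / (p * lam₁ + (1 - p) * lam₂ - 1)) :=
  survival_interval_subcritical_mean_general lam₁ lam₂ p h2 h3 hp1 hmean
end
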